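/- arXiv:2411.19364 — 4 statements merged into one kernel-verified Lean document; each statement's English description precedes it below -/
import Mathlib

section
/- Let l > 1 be an integer, let k ≥ 1, let m₁ > m₂ > ⋯ > m_k ≥ 1 be integers, and let a₁, …, a_k be integers with 1 ≤ a₁ ≤ l − 1 and 0 ≤ a_i ≤ l − 1 for 2 ≤ i ≤ k. Then ‖a₁·l^{m₁} + a₂·l^{m₂} + ⋯ + a_k·l^{m_k}‖_l ≤ m₁ + a₁ + a₂ + ⋯ + a_k − 1. -/
/-!
Horner's scheme. With `μ = m_k`, the number is `(T + a_k·l)·l^(μ-1)` where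
`T = ∑_{i<k} a_i l^(m_i - μ + 1)` is an expansion of the same shape with one term fewer and
leading exponent `m_1 - μ + 1`. Adding `a_k·l` costs `a_k` copies of `l` and multiplying by
`l^(μ-1)` costs `μ - 1`, so the costs telescope to `m_1 + ∑ a_i - 1`.
-/

/-- `CanRepr l n m` means `n` can be expressed using exactly `m` copies of `l`
    combined with addition and multiplication (and parentheses). -/
inductive CanRepr (l : ℕ) : ℕ → ℕ → Prop
  | base : CanRepr l l 1
  | add {a b p q : ℕ} : CanRepr l a p → CanRepr l b q → CanRepr l (a + b) (p + q)
  | mul {a b p q : ℕ} : CanRepr l a p → CanRepr l b q → CanRepr l (a * b) (p + q)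

/-- The `l`-complexity `‖n‖_l`: the minimal number of `l`'s needed to express `n`
    using only addition and multiplication. (By convention `sInf ∅ = 0`.) -/
noncomputable def complexity (l n : ℕ) : ℕ := sInf {m | CanRepr l n m}

namespace CanRepr

variable {l x p : ℕ}

theorem mul_pow (h : CanRepr l x p) (d : ℕ) : CanRepr l (x * l ^ d) (p + d) := by
  induction d with
  | zero => simpa using h
  | succ d ih => simpa only [pow_succ, ← mul_assoc, ← add_assoc] using ih.mul base

theorem add_mul_self (h : CanRepr l x p) (a : ℕ) : CanRepr l (x + a * l) (p + a) := by
  induction a with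
  | zero => simpa using h
  | succ a ih => simpa only [add_mul, one_mul, ← add_assoc] using ih.add base

theorem mul_self {a : ℕ} (ha : 1 ≤ a) : CanRepr l (a * l) a := by
  obtain ⟨b, rfl⟩ := Nat.exists_eq_add_of_le' ha
  simpa only [add_mul, one_mul, add_comm] using (base (l := l)).add_mul_self b

theorem sum_mul_pow (k : ℕ) (m a : Fin (k + 1) → ℕ) (hm : Antitone m)
    (hm1 : 1 ≤ m (Fin.last k)) (ha0 : 1 ≤ a 0) :
    CanRepr l (∑ i, a i * l ^ m i) (m 0 + ∑ i, a i - 1) := by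
  induction k with
  | zero =>
    change 1 ≤ m 0 at hm1
    rw [Fin.sum_univ_one, Fin.sum_univ_one]
    convert (mul_self (l := l) ha0).mul_pow (m 0 - 1) using 1
    · rw [mul_assoc, ← pow_succ', Nat.sub_add_cancel hm1]
    · omega
  | succ k ih =>
    set μ := m (Fin.last (k + 1))
    have hμ : ∀ i, μ ≤ m i := fun i => hm (Fin.le_last i)
    have hT := ih (fun i => m i.castSucc - μ + 1) (fun i => a i.castSucc)
      (fun i j hij => by have := hm (Fin.castSucc_le_castSucc_iff.mpr hij); dsimp only; omega)
      (Nat.le_add_left 1 _) ha0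
    have h := (hT.add_mul_self (a (Fin.last (k + 1)))).mul_pow (μ - 1)
    have hval : (∑ i : Fin (k + 1), a i.castSucc * l ^ (m i.castSucc - μ + 1)
        + a (Fin.last (k + 1)) * l) * l ^ (μ - 1) = ∑ i, a i * l ^ m i := by
      rw [Fin.sum_univ_castSucc (f := fun i => a i * l ^ m i), add_mul, Finset.sum_mul]
      congr 1
      · refine Finset.sum_congr rfl fun i _ => ?_
        rw [mul_assoc, ← pow_add]
        congr 2
        have := hμ i.castSucc
        omega
      · rw [mul_assoc, ← pow_succ', Nat.sub_add_cancel hm1]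
    have hcost : m (0 : Fin (k + 1)).castSucc - μ + 1 + ∑ i : Fin (k + 1), a i.castSucc - 1
        + a (Fin.last (k + 1)) + (μ - 1) = m 0 + ∑ i, a i - 1 := by
      rw [Fin.sum_univ_castSucc (f := a)]
      have := hμ 0
      simp only [Fin.castSucc_zero] at this ⊢
      omega
    rwa [hval, hcost] at h

end CanRepr

theorem complexity_le {l n p : ℕ} (h : CanRepr l n p) : complexity l n ≤ p :=
  Nat.sInf_le h

theorem stmt_1_general (l k : ℕ) (m a : Fin (k + 1) → ℕ)
    (hm : StrictAnti m) (hm1 : 1 ≤ m (Fin.last k))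
    (ha0 : 1 ≤ a 0) :
    complexity l (∑ i, a i * l ^ m i) ≤ m 0 + (∑ i, a i) - 1 :=
  complexity_le (CanRepr.sum_mul_pow k m a hm.antitone hm1 ha0)

theorem stmt_1 (l k : ℕ) (hl : 1 < l) (m a : Fin (k + 1) → ℕ)
    (hm : StrictAnti m) (hm1 : 1 ≤ m (Fin.last k))
    (ha0 : 1 ≤ a 0) (ha : ∀ i, a i ≤ l - 1) :
    complexity l (∑ i, a i * l ^ m i) ≤ m 0 + (∑ i, a i) - 1 :=
  stmt_1_general l k m a hm hm1 ha0
end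

section
/- Let l > 1 be an integer and let n be a positive multiple of l. Then log_l(n) ≤ ‖n‖_l ≤ l·log_l(n) − 1, where log_l denotes the real base-l logarithm. -/
namespace CanRepr

variable {l : ℕ}

theorem pos {n m : ℕ} (h : CanRepr l n m) : 0 < m := by
  induction h <;> omega

theorem le_pow {n m : ℕ} (hl : 1 < l) (h : CanRepr l n m) : n ≤ l ^ m := by
  induction h with
  | base => simp
  | @add a b p q ha hb iha ihb =>
    have two_le_pow {k : ℕ} (hk : 0 < k) : 2 ≤ l ^ k :=
      hl.trans_le (Nat.le_self_pow hk.ne' l)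
    calc a + b ≤ l ^ p + l ^ q := Nat.add_le_add iha ihb
      _ ≤ l ^ p * l ^ q := Nat.add_le_mul (two_le_pow ha.pos) (two_le_pow hb.pos)
      _ = l ^ (p + q) := (pow_add l p q).symm
  | @mul a b p q _ _ iha ihb =>
    calc a * b ≤ l ^ p * l ^ q := Nat.mul_le_mul iha ihb
      _ = l ^ (p + q) := (pow_add l p q).symm

theorem mul_base {q : ℕ} (hq : 0 < q) : CanRepr l (q * l) q := by
  induction q with
  | zero => omega
  | succ q ih =>
    rcases Nat.eq_zero_or_pos q with rfl | hq
    · simpa using base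
    · simpa [Nat.succ_mul] using (ih hq).add base

theorem exists_add_mul_base {a p : ℕ} (h : CanRepr l a p) (r : ℕ) :
    ∃ m ≤ p + r, CanRepr l (a + r * l) m := by
  rcases Nat.eq_zero_or_pos r with rfl | hr
  · exact ⟨p, by simp, by simpa using h⟩
  · exact ⟨p + r, le_rfl, h.add (mul_base hr)⟩

theorem exists_mul_base_lt (hl : 1 < l) {q : ℕ} (hq : 0 < q) :
    ∃ m, CanRepr l (q * l) m ∧ m < l * (Nat.log l q + 1) := by
  induction q using Nat.strong_induction_on with
  | _ q ih =>
    rcases lt_or_ge q l with hql | hlq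
    · exact ⟨q, mul_base hq, by simpa [Nat.log_of_lt hql] using hql⟩
    have hk : 0 < q / l := Nat.div_pos hlq (by omega)
    obtain ⟨m', hm', hm'_lt⟩ := ih (q / l) (Nat.div_lt_self hq hl) hk
    have hlog : Nat.log l q = Nat.log l (q / l) + 1 := by
      have := Nat.log_pos hl hlq
      rw [Nat.log_div_base]
      omega
    obtain ⟨m, hm_le, hm⟩ := (hm'.mul base).exists_add_mul_base (q % l)
    have hdigits : q / l * l * l + q % l * l = q * l := by
      rw [← add_mul, Nat.div_add_mod']
    refine ⟨m, hdigits ▸ hm, ?_⟩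
    have hr : q % l < l := Nat.mod_lt q (by omega)
    rw [hlog, mul_add l _ 1]
    omega

end CanRepr

theorem logb_le_of_canRepr {l n m : ℕ} (hl : 1 < l) (hn : 0 < n) (h : CanRepr l n m) :
    Real.logb l n ≤ m := by
  have hlR : (1 : ℝ) < l := by exact_mod_cast hl
  calc Real.logb l n ≤ Real.logb l ((l : ℝ) ^ m) :=
        Real.logb_le_logb_of_le hlR (by exact_mod_cast hn) (by exact_mod_cast h.le_pow hl)
    _ = m := by rw [Real.logb_pow, Real.logb_self_eq_one hlR, mul_one]

theorem exists_canRepr_add_one_le_mul_log {l n : ℕ} (hl : 1 < l) (hn : 0 < n) (hdvd : l ∣ n) :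
    ∃ m, CanRepr l n m ∧ m + 1 ≤ l * Nat.log l n := by
  obtain ⟨q, rfl⟩ := hdvd
  have hq : 0 < q := Nat.pos_of_mul_pos_left hn
  obtain ⟨m, hm, hm_lt⟩ := CanRepr.exists_mul_base_lt hl hq
  rw [mul_comm, Nat.log_mul_base hl hq.ne']
  exact ⟨m, hm, hm_lt⟩

theorem stmt_2 (l n : ℕ) (hl : 1 < l) (hn : 0 < n) (hdvd : l ∣ n) :
    Real.logb l n ≤ (complexity l n : ℝ) ∧
      (complexity l n : ℝ) ≤ l * Real.logb l n - 1 := by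
  obtain ⟨m, hm, hm_le⟩ := exists_canRepr_add_one_le_mul_log hl hn hdvd
  have hmin : CanRepr l n (complexity l n) := Nat.sInf_mem ⟨m, hm⟩
  refine ⟨logb_le_of_canRepr hl hn hmin, ?_⟩
  have hm_le' : (m : ℝ) + 1 ≤ l * Nat.log l n := by exact_mod_cast hm_le
  calc (complexity l n : ℝ) ≤ m := by exact_mod_cast Nat.sInf_le hm
    _ ≤ l * Nat.log l n - 1 := by linarith
    _ ≤ l * Real.logb l n - 1 := by gcongr; exact Real.natLog_le_logb n l
end

section
/- Let m ≥ 3 and let n be a positive even integer with 2^m < n ≤ 2^{m+1}. Suppose n is not expressible as a sum of one or two powers of 2 and is not of any of the following forms: (a) 2^{m₁} + 2^{m₂} + 2^{m₃} with m = m₁ > m₂ > m₃ ≥ 1; (b) 2^{m₁} + 2^{m₂} + 2^{m₃} + 2^{m₄} with m = m₁ > m₂ > m₃ > m₄ ≥ 2 and m₁ + m₄ = m₂ + m₃; (c) 2^{m₁} + 2^{m₁−3} + 2^{m₂} + 2^{m₂−1} with m = m₁ ≥ m₂ + 3 ≥ 6; (d) 2^m + 2^{m−5} + 2^{m−6} +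 2^{m−7} with m ≥ 10. Then log₂(n) + 2 ≤ ‖n‖₂, where log₂ denotes the real base-2 logarithm. -/
/-- The four special forms of Corollary 7 / Theorem 1.2(2). -/
def GoodForm (m n : ℕ) : Prop :=
  (∃ m₂ m₃, m > m₂ ∧ m₂ > m₃ ∧ 1 ≤ m₃ ∧ n = 2 ^ m + 2 ^ m₂ + 2 ^ m₃) ∨
  (∃ m₂ m₃ m₄, m > m₂ ∧ m₂ > m₃ ∧ m₃ > m₄ ∧ 2 ≤ m₄ ∧ m + m₄ = m₂ + m₃ ∧
    n = 2 ^ m + 2 ^ m₂ + 2 ^ m₃ + 2 ^ m₄) ∨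
  (∃ m₂, m₂ + 3 ≤ m ∧ 6 ≤ m₂ + 3 ∧
    n = 2 ^ m + 2 ^ (m - 3) + 2 ^ m₂ + 2 ^ (m₂ - 1)) ∨
  (10 ≤ m ∧ n = 2 ^ m + 2 ^ (m - 5) + 2 ^ (m - 6) + 2 ^ (m - 7))

/-! A representation of `n` by `p` twos always has `n ≤ 2 ^ p`; call it large when moreover
`2 ^ (p - 2) < n`. Large values are rare and can be listed by induction on the representation:
in a large sum the smaller summand costs at most two twos, so it is `2` or `4`, and in a large
product both factors are large, so their product is a product of two listed shapes, which either
is again a listed shape or is too small. Writing each shape as `2 ^ e * u` with `u` odd, the list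
consists of `2 ^ p`, `2 ^ (p - 1)`, `2 ^ e * (2 ^ i + 1)` and five families lying strictly
between `2 ^ (p - 2)` and `2 ^ (p - 1)`. If `‖n‖₂ ≤ m + 2` for
`2 ^ m < n ≤ 2 ^ (m + 1)`, the optimal representation is large, and the listed shapes of that
size are powers of two, sums of two powers of two and the forms (a)–(d). Hence
`‖n‖₂ ≥ m + 3 ≥ log₂ n + 2`. -/

lemma pow_le_two_pow {j k : ℕ} (h : j ≤ k) : 2 ^ j ≤ 2 ^ k := Nat.pow_le_pow_right two_pos h

namespace CanRepr

theorem bounds {n p : ℕ} (h : CanRepr 2 n p) : 1 ≤ p ∧ 2 ∣ n ∧ 2 * p ≤ n ∧ n ≤ 2 ^ p := by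
  induction h with
  | base => norm_num
  | @add a b p q _ _ iha ihb =>
    obtain ⟨hp, ha, hpa, haP⟩ := iha
    obtain ⟨hq, hb, hqb, hbQ⟩ := ihb
    have h2p := pow_le_two_pow hp
    have h2q := pow_le_two_pow hq
    refine ⟨by omega, dvd_add ha hb, by omega, ?_⟩
    rw [pow_add]
    nlinarith
  | @mul a b p q _ _ iha ihb =>
    obtain ⟨hp, ha, hpa, haP⟩ := iha
    obtain ⟨hq, hb, hqb, hbQ⟩ := ihb
    refine ⟨by omega, ha.mul_right b, by nlinarith, ?_⟩
    rw [pow_add]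
    exact Nat.mul_le_mul haP hbQ

end CanRepr

/-- The shapes `2 ^ e * u` (`u` odd) that a value `2 ^ (p - 2) < n < 2 ^ (p - 1)` written with
`p` twos can have. -/
inductive MidForm : ℕ → ℕ → Prop
  | twoTerms {e i : ℕ} (he : 1 ≤ e) (hi : 1 ≤ i) : MidForm (e + i + 2) (2 ^ e * (2 ^ i + 1))
  | threeTerms {e i j : ℕ} (he : 1 ≤ e) (hi : 1 ≤ i) (hj : 1 ≤ j) :
      MidForm (e + i + j + 2) (2 ^ e * (2 ^ (i + j) + 2 ^ j + 1))
  | product {e i j : ℕ} (he : 2 ≤ e) (hj : 1 ≤ j) (hji : j < i) :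
      MidForm (e + i + j + 2) (2 ^ e * ((2 ^ i + 1) * (2 ^ j + 1)))
  | nineMul {e s : ℕ} (he : 2 ≤ e) (hs : 1 ≤ s) : MidForm (e + s + 5) (2 ^ e * (9 * 2 ^ s + 3))
  | oneThirtyFive {e : ℕ} (he : 3 ≤ e) : MidForm (e + 9) (2 ^ e * 135)

inductive LargeForm : ℕ → ℕ → Prop
  | pow (k : ℕ) : LargeForm k (2 ^ k)
  | half (k : ℕ) : LargeForm (k + 1) (2 ^ k)
  | twoTerms {e i : ℕ} (he : 1 ≤ e) (hi : 1 ≤ i) : LargeForm (e + i + 1) (2 ^ e * (2 ^ i + 1))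
  | mid {p n : ℕ} : MidForm p n → LargeForm p n

lemma two_mul_two_pow_mul_lt {e c u : ℕ} (h : 2 * u < 2 ^ c) : 2 * (2 ^ e * u) < 2 ^ (e + c) := by
  rw [pow_add, mul_left_comm]
  exact Nat.mul_lt_mul_of_pos_left h (by positivity)

namespace MidForm

theorem two_mul_lt {p n : ℕ} (h : MidForm p n) : 2 * n < 2 ^ p := by
  cases h with
  | @twoTerms e i _ hi =>
    rw [add_assoc]
    apply two_mul_two_pow_mul_lt
    have := pow_le_two_pow hi
    rw [pow_add]; omega
  | @threeTerms e i j _ hi hj =>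
    rw [show e + i + j + 2 = e + (i + j + 2) by ring]
    apply two_mul_two_pow_mul_lt
    have := pow_le_two_pow hi
    have := pow_le_two_pow hj
    simp only [pow_add]; nlinarith
  | @product e i j _ hj hji =>
    rw [show e + i + j + 2 = e + (i + j + 2) by ring]
    apply two_mul_two_pow_mul_lt
    have := pow_le_two_pow (show 2 ≤ i by omega)
    have := pow_le_two_pow hj
    simp only [pow_add]; nlinarith
  | @nineMul e s _ _ =>
    rw [add_assoc]
    apply two_mul_two_pow_mul_lt
    rw [pow_add]; have := Nat.one_le_two_pow (n := s); omega
  | oneThirtyFive _ =>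
    exact two_mul_two_pow_mul_lt (by norm_num)

theorem shift {p n : ℕ} (h : MidForm p n) (s : ℕ) : MidForm (s + p) (2 ^ s * n) := by
  cases h with
  | @twoTerms e _ he hi => convert twoTerms (e := s + e) (by omega) hi using 1 <;> ring
  | @threeTerms e _ _ he hi hj => convert threeTerms (e := s + e) (by omega) hi hj using 1 <;> ring
  | @product e _ _ he hj hji => convert product (e := s + e) (by omega) hj hji using 1 <;> ring
  | @nineMul e _ he hs => convert nineMul (e := s + e) (by omega) hs using 1 <;> ring
  | @oneThirtyFive e he => convert oneThirtyFive (e := s + e) (by omega) using 1 <;> ring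

end MidForm

namespace LargeForm

theorem shift {p n : ℕ} (h : LargeForm p n) (s : ℕ) : LargeForm (s + p) (2 ^ s * n) := by
  cases h with
  | pow => convert pow (s + p) using 1; ring
  | half k => convert half (s + k) using 1 <;> ring
  | @twoTerms e _ he hi => convert twoTerms (e := s + e) (by omega) hi using 1 <;> ring
  | mid h => exact mid (h.shift s)

theorem succ_of_lt {p n : ℕ} (h : LargeForm p n) (hn : 2 ^ p < 2 * n) : LargeForm (p + 1) n := by
  cases h with
  | pow => exact half p
  | half => rw [pow_succ] at hn; omega
  | twoTerms he hi => exact mid (MidForm.twoTerms he hi)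
  | mid h => have := h.two_mul_lt; omega

theorem add_two {q a : ℕ} (h : LargeForm q a) (ha : 2 ≤ a) (hq : 2 ^ (q + 1) ≤ 4 * a) :
    LargeForm (q + 1) (a + 2) := by
  cases h with
  | pow =>
    obtain _ | _ | q := q
    · norm_num at ha
    · exact pow 2
    · convert twoTerms (e := 1) (i := q + 1) le_rfl (by omega) using 1 <;> ring
  | half k =>
    obtain _ | _ | k := k
    · norm_num at ha
    · exact half 2
    · convert mid (MidForm.twoTerms (e := 1) (i := k + 1) le_rfl (by omega)) using 1 <;> ring
  | @twoTerms e i he hi =>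
    obtain _ | e := e
    · omega
    obtain _ | e := e
    · obtain _ | i := i
      · omega
      obtain _ | i := i
      · exact half 3
      · convert mid (MidForm.twoTerms (e := 2) (i := i + 1) (by omega) (by omega)) using 1 <;> ring
    · convert mid (MidForm.threeTerms (e := 1) (i := i) (j := e + 1) le_rfl hi (by omega))
        using 1 <;> ring
  | mid h => have := h.two_mul_lt; rw [pow_succ] at hq; omega

theorem add_four {q a : ℕ} (h : LargeForm q a) (ha : 4 ≤ a) (hq : 2 ^ q < a + 4) :
    LargeForm (q + 2) (a + 4) := by
  cases h with
  | pow =>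
    obtain _ | _ | _ | q := q
    · norm_num at ha
    · norm_num at ha
    · exact half 3
    · convert mid (MidForm.twoTerms (e := 2) (i := q + 1) (by omega) (by omega)) using 1 <;> ring
  | half => rw [pow_succ] at hq; omega
  | @twoTerms e i he hi =>
    have hx := pow_le_two_pow he
    have hy := pow_le_two_pow hi
    rw [pow_add, pow_add] at hq
    obtain rfl : e = 1 := by
      by_contra
      have := pow_le_two_pow (show 2 ≤ e by omega)
      nlinarith
    obtain rfl : i = 1 := by
      by_contra
      have := pow_le_two_pow (show 2 ≤ i by omega)
      nlinarith
    exact mid (MidForm.twoTerms (e := 1) (i := 2) le_rfl (by omega))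
  | mid h => have := h.two_mul_lt; omega

end LargeForm

theorem CanRepr.largeForm_add {q r a b : ℕ} (ha : CanRepr 2 a q) (hb : CanRepr 2 b r)
    (hrq : r ≤ q) (iha : 2 ^ q < 4 * a → LargeForm q a) (h : 2 ^ (q + r) < 4 * (a + b)) :
    LargeForm (q + r) (a + b) := by
  obtain ⟨hq, ⟨c, rfl⟩, hqa, haq⟩ := ha.bounds
  obtain ⟨hr, -, hrb, hbr⟩ := hb.bounds
  have hr2 : r ≤ 2 := by
    by_contra
    have := pow_le_two_pow hrq
    have : 2 ^ (q + 3) ≤ 2 ^ (q + r) := pow_le_two_pow (by omega)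
    rw [pow_add] at this; omega
  interval_cases r
  · obtain rfl : b = 2 := by omega
    have hq' : 2 ^ (q + 1) ≤ 4 * (2 * c) := by
      obtain _ | _ | q := q
      · omega
      · omega
      · simp only [pow_add] at h ⊢; omega
    exact (iha (by rw [pow_succ] at hq'; omega)).add_two (by omega) hq'
  · obtain rfl : b = 4 := by norm_num at hbr; omega
    rw [pow_add] at h
    exact (iha (by omega)).add_four (by omega) (by omega)

/- In the next five lemmas the hypothesis says that `2 ^ e₁ * (2 ^ g + 1)`, written with
`e₁ + g + 1` twos, times a `MidForm` value `2 ^ e₂ * u` with `e₂ + c` twos exceeds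
`2 ^ (e₁ + g + 1 + e₂ + c - 2)`, after cancelling `2 ^ (e₁ + e₂ + 1)`. -/

lemma exps_of_pow_lt_mul_twoTerms {g i : ℕ} (hg : 1 ≤ g) (hi : 1 ≤ i)
    (h : 2 ^ (g + (i + 2)) < 2 * ((2 ^ g + 1) * (2 ^ i + 1))) : g = 1 ∧ i = 1 := by
  have hx := pow_le_two_pow hg
  have hy := pow_le_two_pow hi
  simp only [pow_add] at h
  constructor
  · by_contra
    have := pow_le_two_pow (show 2 ≤ g by omega)
    nlinarith
  · by_contra
    have := pow_le_two_pow (show 2 ≤ i by omega)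
    nlinarith

lemma exps_of_pow_lt_mul_threeTerms {g i j : ℕ} (hg : 1 ≤ g) (hi : 1 ≤ i) (hj : 1 ≤ j)
    (h : 2 ^ (g + (i + j + 2)) < 2 * ((2 ^ g + 1) * (2 ^ (i + j) + 2 ^ j + 1))) :
    g = 1 ∧ i = 1 ∨ g = 1 ∧ i = 2 ∧ j = 1 ∨ g = 2 ∧ i = 1 ∧ j ≤ 2 := by
  have hx := pow_le_two_pow hg
  have hy := pow_le_two_pow hi
  have hz := pow_le_two_pow hj
  simp only [pow_add] at h
  have hg' : g < 3 := by
    by_contra! hg'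
    have hx' := pow_le_two_pow hg'
    nlinarith [Nat.mul_le_mul_left (2 ^ g * 2 ^ j) hy, Nat.mul_le_mul_left (2 ^ i * 2 ^ j) hx']
  have hi' : i < 3 := by
    by_contra! hi'
    have hy' := pow_le_two_pow hi'
    nlinarith [Nat.mul_le_mul_left (2 ^ g * 2 ^ j) hy', Nat.mul_le_mul_left (2 ^ i * 2 ^ j) hx]
  interval_cases g <;> interval_cases i
  · omega
  · have : j < 2 := by
      by_contra! hj'
      have := pow_le_two_pow hj'
      nlinarith
    omega
  · have : j < 3 := by
      by_contra! hj'
      have := pow_le_two_pow hj'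
      nlinarith
    omega
  · nlinarith

lemma exps_of_pow_lt_mul_product {g i j : ℕ} (hg : 1 ≤ g) (hj : 1 ≤ j) (hji : j < i)
    (h : 2 ^ (g + (i + j + 2)) < 2 * ((2 ^ g + 1) * ((2 ^ i + 1) * (2 ^ j + 1)))) :
    g = 1 ∧ j = 1 ∨ g = 1 ∧ i = 3 ∧ j = 2 ∨ g = 2 ∧ i ≤ 3 ∧ j = 1 ∨ g = 3 ∧ i = 2 ∧ j = 1 := by
  have hx := pow_le_two_pow hg
  have hy := pow_le_two_pow (show 2 ≤ i by omega)
  have hz := pow_le_two_pow hj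
  have hyz : 2 ^ (j + 1) ≤ 2 ^ i := pow_le_two_pow hji
  simp only [pow_add] at h hyz
  have hg' : g < 4 := by
    by_contra! hg'
    have hx' := pow_le_two_pow hg'
    nlinarith [Nat.mul_le_mul_left (2 ^ g * 2 ^ j) hy, Nat.mul_le_mul_left (2 ^ i * 2 ^ j) hx',
      Nat.mul_le_mul_left (2 ^ g * 2 ^ i) hz]
  have hj' : j < 3 := by
    by_contra! hj'
    have hz' := pow_le_two_pow hj'
    nlinarith [Nat.mul_le_mul_left (2 ^ g * 2 ^ j) hyz, Nat.mul_le_mul_left (2 ^ i * 2 ^ j) hx,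
      Nat.mul_le_mul_left (2 ^ g * 2 ^ i) hz', Nat.mul_le_mul_left (2 ^ g * 2 ^ j) hz']
  interval_cases g <;> interval_cases j
  · omega
  all_goals
    have hi' : i < 4 := by
      by_contra! hi'
      have := pow_le_two_pow hi'
      nlinarith
    interval_cases i <;> simp_all

lemma not_pow_lt_mul_nineMul {g s : ℕ} (hg : 1 ≤ g) (hs : 1 ≤ s) :
    ¬ 2 ^ (g + (s + 5)) < 2 * ((2 ^ g + 1) * (9 * 2 ^ s + 3)) := by
  have hx := pow_le_two_pow hg
  have hw := pow_le_two_pow hs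
  simp only [pow_add]
  nlinarith

lemma not_pow_lt_mul_oneThirtyFive {g : ℕ} (hg : 1 ≤ g) :
    ¬ 2 ^ (g + 9) < 2 * ((2 ^ g + 1) * 135) := by
  have hx := pow_le_two_pow hg
  rw [pow_add]
  omega

lemma pow_lt_four_mul_cancel {e₁ e₂ g c r u : ℕ} (hr : r = e₂ + c)
    (h : 2 ^ (e₁ + g + 1 + r) < 4 * (2 ^ e₁ * (2 ^ g + 1) * (2 ^ e₂ * u))) :
    2 ^ (g + c) < 2 * ((2 ^ g + 1) * u) := by
  have : 2 ^ (e₁ + e₂) * (2 * 2 ^ (g + c)) < 2 ^ (e₁ + e₂) * (2 * (2 * ((2 ^ g + 1) * u))) := by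
    convert h using 1 <;> subst hr <;> ring
  exact Nat.lt_of_mul_lt_mul_left (Nat.lt_of_mul_lt_mul_left this)

namespace LargeForm

theorem twoTerms_mul_twoTerms {e₁ g e₂ h : ℕ} (he₁ : 1 ≤ e₁) (hg : 1 ≤ g) (he₂ : 1 ≤ e₂)
    (hh : 1 ≤ h) :
    LargeForm (e₁ + g + 1 + (e₂ + h + 1)) (2 ^ e₁ * (2 ^ g + 1) * (2 ^ e₂ * (2 ^ h + 1))) := by
  rcases lt_trichotomy g h with hgh | rfl | hgh
  · convert mid (MidForm.product (e := e₁ + e₂) (by omega) hg hgh) using 1 <;> ring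
  · obtain rfl | hg := eq_or_lt_of_le hg
    · convert twoTerms (e := e₁ + e₂) (i := 3) (by omega) (by omega) using 1 <;> ring
    · obtain ⟨k, rfl⟩ : ∃ k, g = k + 2 := ⟨g - 2, by omega⟩
      convert mid (MidForm.threeTerms (e := e₁ + e₂) (i := k + 1) (j := k + 3)
        (by omega) (by omega) (by omega)) using 1 <;> ring
  · convert mid (MidForm.product (e := e₁ + e₂) (by omega) hh hgh) using 1 <;> ring

theorem twoTerms_mul_threeTerms {e₁ g e₂ i j : ℕ} (he₁ : 1 ≤ e₁) (hg : 1 ≤ g) (he₂ : 1 ≤ e₂)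
    (hi : 1 ≤ i) (hj : 1 ≤ j)
    (h : 2 ^ (g + (i + j + 2)) < 2 * ((2 ^ g + 1) * (2 ^ (i + j) + 2 ^ j + 1))) :
    LargeForm (e₁ + g + 1 + (e₂ + i + j + 2))
      (2 ^ e₁ * (2 ^ g + 1) * (2 ^ e₂ * (2 ^ (i + j) + 2 ^ j + 1))) := by
  rcases exps_of_pow_lt_mul_threeTerms hg hi hj h with
    ⟨rfl, rfl⟩ | ⟨rfl, rfl, rfl⟩ | ⟨rfl, rfl, hj2⟩
  · convert mid (MidForm.nineMul (e := e₁ + e₂) (s := j) (by omega) hj) using 1 <;> ring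
  · convert mid (MidForm.twoTerms (e := e₁ + e₂) (i := 5) (by omega) (by omega)) using 1 <;> ring
  · interval_cases j
    · convert mid (MidForm.threeTerms (e := e₁ + e₂) (i := 4) (j := 1)
        (by omega) (by omega) (by omega)) using 1 <;> ring
    · convert mid (MidForm.twoTerms (e := e₁ + e₂) (i := 6) (by omega) (by omega)) using 1 <;> ring

theorem twoTerms_mul_product {e₁ g e₂ i j : ℕ} (he₁ : 1 ≤ e₁) (hg : 1 ≤ g) (he₂ : 2 ≤ e₂)
    (hj : 1 ≤ j) (hji : j < i)
    (h : 2 ^ (g + (i + j + 2)) < 2 * ((2 ^ g + 1) * ((2 ^ i + 1) * (2 ^ j + 1)))) :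
    LargeForm (e₁ + g + 1 + (e₂ + i + j + 2))
      (2 ^ e₁ * (2 ^ g + 1) * (2 ^ e₂ * ((2 ^ i + 1) * (2 ^ j + 1)))) := by
  have h135 : 3 ≤ e₁ + e₂ := by omega
  rcases exps_of_pow_lt_mul_product hg hj hji h with
    ⟨rfl, rfl⟩ | ⟨rfl, rfl, rfl⟩ | ⟨rfl, hi3, rfl⟩ | ⟨rfl, rfl, rfl⟩
  · obtain rfl | rfl | hi := (show i = 2 ∨ i = 3 ∨ 3 < i by omega)
    · convert mid (MidForm.product (e := e₁ + e₂) (i := 3) (j := 2) (by omega) (by omega)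
        (by omega)) using 1 <;> ring
    · convert mid (MidForm.threeTerms (e := e₁ + e₂) (i := 2) (j := 4)
        (by omega) (by omega) (by omega)) using 1 <;> ring
    · convert mid (MidForm.product (e := e₁ + e₂) (i := i) (j := 3) (by omega) (by omega) hi)
        using 1 <;> ring
  · convert mid (MidForm.oneThirtyFive (e := e₁ + e₂) h135) using 1 <;> ring
  · interval_cases i
    · convert mid (MidForm.nineMul (e := e₁ + e₂) (s := 3) (by omega) (by omega)) using 1 <;> ring
    · convert mid (MidForm.oneThirtyFive (e := e₁ + e₂) h135) using 1 <;> ring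
  · convert mid (MidForm.oneThirtyFive (e := e₁ + e₂) h135) using 1 <;> ring

theorem twoTerms_mul_mid {e g r b : ℕ} (he : 1 ≤ e) (hg : 1 ≤ g) (hb : MidForm r b)
    (h : 2 ^ (e + g + 1 + r) < 4 * (2 ^ e * (2 ^ g + 1) * b)) :
    LargeForm (e + g + 1 + r) (2 ^ e * (2 ^ g + 1) * b) := by
  cases hb with
  | @twoTerms e₂ i he₂ hi =>
    obtain ⟨rfl, rfl⟩ := exps_of_pow_lt_mul_twoTerms hg hi (pow_lt_four_mul_cancel (by ring) h)
    convert mid (MidForm.twoTerms (e := e + e₂) (i := 3) (by omega) (by omega)) using 1 <;> ring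
  | threeTerms he₂ hi hj =>
    exact twoTerms_mul_threeTerms he hg he₂ hi hj (pow_lt_four_mul_cancel (by ring) h)
  | product he₂ hj hji =>
    exact twoTerms_mul_product he hg he₂ hj hji (pow_lt_four_mul_cancel (by ring) h)
  | nineMul he₂ hs =>
    exact absurd (pow_lt_four_mul_cancel (c := _ + 5) (by ring) h) (not_pow_lt_mul_nineMul hg hs)
  | oneThirtyFive he₂ =>
    exact absurd (pow_lt_four_mul_cancel rfl h) (not_pow_lt_mul_oneThirtyFive hg)

theorem half_mul {r b : ℕ} (hb : LargeForm r b) (k : ℕ) (h : 2 ^ (k + 1 + r) < 4 * (2 ^ k * b)) :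
    LargeForm (k + 1 + r) (2 ^ k * b) := by
  rw [add_right_comm]
  refine (hb.shift k).succ_of_lt ?_
  rw [add_right_comm, pow_succ] at h
  omega

theorem swap {q r a b : ℕ} (h : LargeForm (r + q) (b * a)) : LargeForm (q + r) (a * b) := by
  rwa [add_comm, mul_comm]

theorem mul {q r a b : ℕ} (ha : LargeForm q a) (hb : LargeForm r b)
    (h : 2 ^ (q + r) < 4 * (a * b)) : LargeForm (q + r) (a * b) := by
  have h' : 2 ^ (r + q) < 4 * (b * a) := by rwa [add_comm, mul_comm b]
  cases ha with
  | pow => exact hb.shift q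
  | half k => exact hb.half_mul k h
  | twoTerms he hg =>
    cases hb with
    | pow => exact swap ((twoTerms he hg).shift r)
    | half k => exact swap ((twoTerms he hg).half_mul k h')
    | twoTerms he₂ hh => exact twoTerms_mul_twoTerms he hg he₂ hh
    | mid hb => exact twoTerms_mul_mid he hg hb h
  | mid ha =>
    cases hb with
    | pow => exact swap ((mid ha).shift r)
    | half k => exact swap ((mid ha).half_mul k h')
    | twoTerms he hg => exact swap (twoTerms_mul_mid he hg ha h')
    | mid hb =>
      have := Nat.mul_lt_mul'' ha.two_mul_lt hb.two_mul_lt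
      rw [pow_add] at h
      nlinarith

end LargeForm

theorem CanRepr.largeForm {n p : ℕ} (h : CanRepr 2 n p) (hn : 2 ^ p < 4 * n) : LargeForm p n := by
  induction h with
  | base => exact LargeForm.pow 1
  | @add a b q r ha hb iha ihb =>
    rcases le_total r q with hrq | hqr
    · exact largeForm_add ha hb hrq iha hn
    · rw [add_comm q, add_comm a] at hn ⊢
      exact largeForm_add hb ha hqr ihb hn
  | @mul a b q r ha hb iha ihb =>
    obtain ⟨-, -, -, haq⟩ := ha.bounds
    obtain ⟨-, -, -, hbr⟩ := hb.bounds
    rw [pow_add] at hn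
    refine (iha ?_).mul (ihb ?_) (by rwa [pow_add])
    · nlinarith [Nat.mul_le_mul_left (4 * a) hbr]
    · nlinarith [Nat.mul_le_mul_right (4 * b) haq]

theorem MidForm.goodForm {m n : ℕ} (h : MidForm (m + 2) n) :
    (∃ k j : ℕ, n = 2 ^ k + 2 ^ j) ∨ GoodForm m n := by
  generalize hp : m + 2 = p at h
  cases h with
  | @twoTerms e i _ _ => exact Or.inl ⟨e + i, e, by ring⟩
  | @threeTerms e i j he hi hj =>
    obtain rfl : m = e + i + j := by omega
    exact Or.inr (Or.inl ⟨e + j, e, by omega, by omega, he, by ring⟩)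
  | @product e i j he hj hji =>
    obtain rfl : m = e + i + j := by omega
    exact Or.inr (Or.inr (Or.inl ⟨e + i, e + j, e, by omega, by omega, by omega, he, by ring,
      by ring⟩))
  | @nineMul e s he hs =>
    obtain rfl : m = e + s + 3 := by omega
    refine Or.inr (Or.inr (Or.inr (Or.inl ⟨e + 1, by omega, by omega, ?_⟩)))
    rw [Nat.add_sub_cancel, Nat.add_sub_cancel]
    ring
  | @oneThirtyFive e he =>
    obtain rfl : m = e + 7 := by omega
    refine Or.inr (Or.inr (Or.inr (Or.inr ⟨by omega, ?_⟩)))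
    rw [show e + 7 - 5 = e + 2 by omega, show e + 7 - 6 = e + 1 by omega, Nat.add_sub_cancel]
    ring

theorem CanRepr.add_three_le {m n p : ℕ} (h : CanRepr 2 n p) (hlb : 2 ^ m < n)
    (hub : n ≤ 2 ^ (m + 1)) (h1 : ¬ ∃ k : ℕ, n = 2 ^ k) (h2 : ¬ ∃ k j : ℕ, n = 2 ^ k + 2 ^ j)
    (hform : ¬ GoodForm m n) : m + 3 ≤ p := by
  by_contra! hp
  have hpn : 2 ^ p < 4 * n := by
    have := pow_le_two_pow (show p ≤ m + 2 by omega)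
    rw [pow_succ, pow_succ] at this; omega
  cases h.largeForm hpn with
  | pow => exact h1 ⟨p, rfl⟩
  | half k => exact h1 ⟨k, rfl⟩
  | @twoTerms e i _ _ => exact h2 ⟨e + i, e, by ring⟩
  | mid hmid =>
    have := hmid.two_mul_lt
    obtain rfl : p = m + 2 := by
      have : m + 1 < p := (Nat.pow_lt_pow_iff_right (a := 2) (by norm_num)).1 (by
        rw [pow_succ] at hub ⊢; omega)
      omega
    exact hmid.goodForm.elim h2 hform

theorem canRepr_two_mul {k : ℕ} (hk : 1 ≤ k) : CanRepr 2 (2 * k) k := by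
  induction k, hk using Nat.le_induction with
  | base => exact CanRepr.base
  | succ k _ ih => exact ih.add CanRepr.base

theorem stmt_10_general (m n : ℕ) (heven : 2 ∣ n)
    (hlb : 2 ^ m < n) (hub : n ≤ 2 ^ (m + 1))
    (h1 : ¬ ∃ k : ℕ, n = 2 ^ k)
    (h2 : ¬ ∃ k j : ℕ, n = 2 ^ k + 2 ^ j)
    (hform : ¬ GoodForm m n) :
    Real.logb 2 n + 2 ≤ (complexity 2 n : ℝ) := by
  obtain ⟨k, rfl⟩ := heven
  have hrepr : CanRepr 2 (2 * k) (complexity 2 (2 * k)) :=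
    Nat.sInf_mem ⟨k, canRepr_two_mul (by omega)⟩
  have hcompl : m + 3 ≤ complexity 2 (2 * k) := hrepr.add_three_le hlb hub h1 h2 hform
  have hlog : Real.logb 2 (2 * k : ℕ) ≤ m + 1 := by
    calc Real.logb 2 (2 * k : ℕ) ≤ Real.logb 2 ((2 : ℝ) ^ (m + 1)) :=
          Real.logb_le_logb_of_le (by norm_num) (by norm_cast; omega) (by exact_mod_cast hub)
      _ = m + 1 := by simp [Real.logb_pow]
  have : (m : ℝ) + 3 ≤ complexity 2 (2 * k) := by exact_mod_cast hcompl
  linarith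

theorem stmt_10 (m n : ℕ) (hm : 3 ≤ m) (hn : 0 < n) (heven : 2 ∣ n)
    (hlb : 2 ^ m < n) (hub : n ≤ 2 ^ (m + 1))
    (h1 : ¬ ∃ k : ℕ, n = 2 ^ k)
    (h2 : ¬ ∃ k j : ℕ, n = 2 ^ k + 2 ^ j)
    (hform : ¬ GoodForm m n) :
    Real.logb 2 n + 2 ≤ (complexity 2 n : ℝ) :=
  stmt_10_general m n heven hlb hub h1 h2 hform
end

section
/- Let n be a positive even integer whose binary expansion has at least five nonzero digits (i.e., n is a sum of at least five distinct powers of 2). Then log₂(n) + 2 ≤ ‖n‖₂, where log₂ denotes the real base-2 logarithm. -/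
/-!
Write `s n` for the binary digit sum and `L n = Nat.log 2 n`. An expression with `m` twos has
value `n ≤ 2 ^ m`; the theorem sharpens this to `L n + 3 ≤ m` when `s n ≥ 5`, and then
`log₂ n < L n + 1 ≤ m - 2`. The sharpened bounds (`L n + 2 ≤ m` once `s n ≥ 3`, `L n + 3 ≤ m`
once `s n ≥ 5`) are proved together by induction on the expression. Sums and products of terms
with digit sum at least 3 lose enough bits on their own; the delicate cases involve a term of
digit sum at most 2, that is `2 ^ k` or `2 ^ k * (2 ^ x + 1)`. Multiplying `b` by `2 ^ x + 1` can
gain a full bit, so the induction carries one more clause: `L b + 3 ≤ m` whenever some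
`(2 ^ c + 1) * b` reaches bit length `L b + c + 2` with at least five ones (`HasHeavyMultiple`).
The few products of factors `2 ^ c + 1` that reach the top bit are enumerated explicitly; all of
them have digit sum at most 4.
-/

namespace TwoComplexity

/-! ### Binary digit sums -/

def digitSum (n : ℕ) : ℕ := (Nat.digits 2 n).sum

theorem digitSum_eq_mod_add_div (n : ℕ) : digitSum n = n % 2 + digitSum (n / 2) := by
  rcases Nat.eq_zero_or_pos n with rfl | hn
  · simp [digitSum]
  · rw [digitSum, Nat.digits_def' one_lt_two hn, List.sum_cons, digitSum]

theorem digitSum_eq_zero_iff {n : ℕ} : digitSum n = 0 ↔ n = 0 := by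
  refine ⟨fun h => ?_, fun h => by simp [h, digitSum]⟩
  induction n using Nat.strong_induction_on with
  | _ n ih =>
    rw [digitSum_eq_mod_add_div] at h
    rcases Nat.eq_zero_or_pos n with rfl | hn
    · rfl
    have := ih (n / 2) (by omega) (by omega)
    omega

theorem digitSum_add_add_le {a b c : ℕ} (hc : c ≤ 1) :
    digitSum (a + b + c) ≤ digitSum a + digitSum b + c := by
  induction h : a + b + c using Nat.strong_induction_on generalizing a b c with
  | _ n ih =>
    rcases Nat.eq_zero_or_pos n with rfl | hn
    · obtain ⟨rfl, rfl, rfl⟩ : a = 0 ∧ b = 0 ∧ c = 0 := by omega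
      simp [digitSum]
    set carry := (a % 2 + b % 2 + c) / 2
    have hcarry := ih (a / 2 + b / 2 + carry) (by omega) (by omega : carry ≤ 1) rfl
    rw [← h, digitSum_eq_mod_add_div, show (a + b + c) / 2 = a / 2 + b / 2 + carry by omega,
      digitSum_eq_mod_add_div a, digitSum_eq_mod_add_div b]
    omega

theorem digitSum_add_le (a b : ℕ) : digitSum (a + b) ≤ digitSum a + digitSum b := by
  simpa using digitSum_add_add_le (a := a) (b := b) (c := 0) zero_le_one

theorem digitSum_two_pow_mul_add (k y : ℕ) {x : ℕ} (hx : x < 2 ^ k) :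
    digitSum (2 ^ k * y + x) = digitSum y + digitSum x := by
  induction k generalizing x with
  | zero =>
    obtain rfl : x = 0 := by simpa using hx
    simp [digitSum]
  | succ k ih =>
    rw [pow_succ] at hx
    rw [show 2 ^ (k + 1) * y + x = 2 * (2 ^ k * y) + x by ring, digitSum_eq_mod_add_div,
      show (2 * (2 ^ k * y) + x) / 2 = 2 ^ k * y + x / 2 by omega, ih (by omega), digitSum_eq_mod_add_div x]
    omega

theorem digitSum_two_pow_mul (k y : ℕ) : digitSum (2 ^ k * y) = digitSum y := by
  simpa [digitSum] using digitSum_two_pow_mul_add k y (Nat.two_pow_pos k)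

@[simp]
theorem digitSum_two_pow (k : ℕ) : digitSum (2 ^ k) = 1 := by
  simpa [digitSum] using digitSum_two_pow_mul k 1

theorem digitSum_le_log {n : ℕ} (hn : 2 ∣ n) : digitSum n ≤ Nat.log 2 n := by
  obtain ⟨m, rfl⟩ := hn
  rcases Nat.eq_zero_or_pos m with rfl | hm
  · simp [digitSum]
  have hdigits : digitSum m ≤ (Nat.digits 2 m).length := by
    simpa [digitSum] using List.sum_le_card_nsmul _ 1 fun d hd =>
      Nat.le_of_lt_succ (Nat.digits_lt_base one_lt_two hd)
  rw [Nat.length_digits 2 m one_lt_two hm.ne'] at hdigits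
  rwa [← pow_one 2, digitSum_two_pow_mul, pow_one, mul_comm, Nat.log_mul_base one_lt_two hm.ne']

theorem exists_eq_two_pow_of_digitSum_eq_one {n : ℕ} (h : digitSum n = 1) : ∃ k, n = 2 ^ k := by
  induction n using Nat.strong_induction_on with
  | _ n ih =>
    have hn0 : n ≠ 0 := by rintro rfl; simp [digitSum] at h
    rw [digitSum_eq_mod_add_div] at h
    rcases Nat.mod_two_eq_zero_or_one n with hn | hn
    · obtain ⟨k, hk⟩ := ih (n / 2) (by omega) (by omega)
      exact ⟨k + 1, by rw [pow_succ]; omega⟩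
    · have := digitSum_eq_zero_iff.mp (by omega : digitSum (n / 2) = 0)
      exact ⟨0, by omega⟩

theorem exists_eq_two_pow_mul_two_pow_add_one {n : ℕ} (hn : 2 ∣ n) (h : digitSum n = 2) :
    ∃ k x, 1 ≤ k ∧ 1 ≤ x ∧ n = 2 ^ k * (2 ^ x + 1) := by
  induction n using Nat.strong_induction_on with
  | _ n ih =>
    obtain ⟨m, rfl⟩ := hn
    rw [← pow_one 2, digitSum_two_pow_mul, pow_one] at h
    rcases Nat.even_or_odd' m with ⟨m', rfl | rfl⟩
    · have hm' : m' ≠ 0 := by rintro rfl; simp [digitSum] at h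
      obtain ⟨k, x, hk, hx, hm⟩ := ih (2 * m') (by omega) ⟨m', rfl⟩ h
      exact ⟨k + 1, x, by omega, hx, by rw [hm, pow_succ]; ring⟩
    · rw [digitSum_eq_mod_add_div, show (2 * m' + 1) / 2 = m' by omega] at h
      obtain ⟨y, rfl⟩ := exists_eq_two_pow_of_digitSum_eq_one (by omega : digitSum m' = 1)
      exact ⟨1, y + 1, le_rfl, by omega, by ring⟩

theorem digitSum_le_length_of_eq_sum_map_two_pow {n : ℕ} (l : List ℕ)
    (h : n = (l.map (2 ^ ·)).sum) : digitSum n ≤ l.length := by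
  subst h
  induction l with
  | nil => simp [digitSum]
  | cons k l ih =>
    simp only [List.map_cons, List.sum_cons, List.length_cons]
    have := digitSum_add_le (2 ^ k) (l.map (2 ^ ·)).sum
    rw [digitSum_two_pow] at this
    omega

/-! ### Binary logarithms -/

theorem log_two_pow_mul (k : ℕ) {b : ℕ} (hb : b ≠ 0) :
    Nat.log 2 (2 ^ k * b) = k + Nat.log 2 b := by
  induction k with
  | zero => simp
  | succ k ih =>
    rw [pow_succ, mul_right_comm, Nat.log_mul_base one_lt_two (by positivity), ih]
    ring

theorem log_two_pow_add {j r : ℕ} (hr : r < 2 ^ j) : Nat.log 2 (2 ^ j + r) = j :=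
  Nat.log_eq_of_pow_le_of_lt_pow (by omega) (by rw [pow_succ]; omega)

theorem log_two_pow_mul_two_pow_add_one (k : ℕ) {x : ℕ} (hx : 1 ≤ x) :
    Nat.log 2 (2 ^ k * (2 ^ x + 1)) = k + x := by
  rw [log_two_pow_mul k (by positivity), log_two_pow_add (Nat.one_lt_two_pow (by omega))]

theorem log_add_le (a b : ℕ) :
    Nat.log 2 (a + b) ≤ max (Nat.log 2 a) (Nat.log 2 b) + 1 := by
  have ha := Nat.lt_pow_succ_log_self one_lt_two a
  have hb := Nat.lt_pow_succ_log_self one_lt_two b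
  have hpow : 2 ^ (Nat.log 2 a).succ ≤ 2 ^ (max (Nat.log 2 a) (Nat.log 2 b) + 1) ∧
      2 ^ (Nat.log 2 b).succ ≤ 2 ^ (max (Nat.log 2 a) (Nat.log 2 b) + 1) :=
    ⟨Nat.pow_le_pow_right two_pos (by omega), Nat.pow_le_pow_right two_pos (by omega)⟩
  refine Nat.le_of_lt_succ (Nat.log_lt_of_lt_pow' (by omega) ?_)
  rw [pow_succ]
  omega

theorem log_mul_le (a b : ℕ) : Nat.log 2 (a * b) ≤ Nat.log 2 a + Nat.log 2 b + 1 := by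
  refine Nat.le_of_lt_succ (Nat.log_lt_of_lt_pow' (by omega) ?_)
  calc a * b < 2 ^ (Nat.log 2 a + 1) * 2 ^ (Nat.log 2 b + 1) :=
        Nat.mul_lt_mul'' (Nat.lt_pow_succ_log_self one_lt_two a)
          (Nat.lt_pow_succ_log_self one_lt_two b)
    _ = 2 ^ (Nat.log 2 a + Nat.log 2 b + 1).succ := by rw [← pow_add]; congr 1; omega

theorem le_log_two_pow_add_one_mul (x : ℕ) {b : ℕ} (hb : b ≠ 0) :
    x + Nat.log 2 b ≤ Nat.log 2 ((2 ^ x + 1) * b) :=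
  Nat.le_log_of_pow_le one_lt_two <| by
    rw [pow_add]
    exact Nat.mul_le_mul (Nat.le_succ _) (Nat.pow_log_le_self 2 hb)

theorem log_two_pow_add_one_mul_le (x b : ℕ) :
    Nat.log 2 ((2 ^ x + 1) * b) ≤ x + Nat.log 2 b + 1 := by
  refine Nat.le_of_lt_succ (Nat.log_lt_of_lt_pow' (by omega) ?_)
  calc (2 ^ x + 1) * b < 2 ^ (x + 1) * 2 ^ (Nat.log 2 b + 1) :=
        Nat.mul_lt_mul_of_le_of_lt (by rw [pow_succ]; linarith [Nat.one_le_two_pow (n := x)])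
          (Nat.lt_pow_succ_log_self one_lt_two b) (by positivity)
    _ = 2 ^ (x + Nat.log 2 b + 1).succ := by rw [← pow_add]; congr 1; omega

theorem two_pow_add_two_pow_lt {i j K : ℕ} (hij : i ≠ j) (hi : i < K) (hj : j < K) :
    2 ^ i + 2 ^ j < 2 ^ K := by
  wlog h : i < j generalizing i j
  · rw [add_comm]; exact this hij.symm hj hi (by omega)
  have := Nat.pow_lt_pow_right one_lt_two h
  have := Nat.pow_le_pow_right two_pos (show j + 1 ≤ K by omega)
  rw [pow_succ] at this
  omega

theorem add_le_two_pow_add {a b p q : ℕ} (hp : 1 ≤ p) (hq : 1 ≤ q) (ha : a ≤ 2 ^ p)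
    (hb : b ≤ 2 ^ q) : a + b ≤ 2 ^ (p + q) := by
  have hP : 2 ≤ 2 ^ p := by simpa using Nat.pow_le_pow_right two_pos hp
  have hQ : 2 ≤ 2 ^ q := by simpa using Nat.pow_le_pow_right two_pos hq
  rw [pow_add]
  nlinarith

/-! ### Products of factors `2 ^ c + 1` that reach the top bit -/

theorem eq_one_of_two_pow_le_mul {c x : ℕ} (hc : 1 ≤ c) (hx : 1 ≤ x)
    (h : 2 ^ (c + x + 1) ≤ (2 ^ c + 1) * (2 ^ x + 1)) : c = 1 ∧ x = 1 := by
  have key : ∀ {u v : ℕ}, 2 ≤ u → 1 ≤ v → (2 ^ u + 1) * (2 ^ v + 1) < 2 ^ (u + v + 1) := by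
    intro u v hu hv
    have hU : 4 ≤ 2 ^ u := by simpa using Nat.pow_le_pow_right two_pos hu
    have hV : 2 ≤ 2 ^ v := by simpa using Nat.pow_le_pow_right two_pos hv
    rw [pow_succ, pow_add]
    nlinarith
  by_contra hne
  rcases (by omega : 2 ≤ c ∨ 2 ≤ x) with hc2 | hx2
  · exact absurd h (not_le.mpr (key hc2 hx))
  · have := key hx2 hc
    rw [mul_comm, add_comm x c] at this
    omega

theorem digitSum_le_four_of_two_pow_le_three_mul {y z : ℕ} (hy : 1 ≤ y) (hz : 1 ≤ z)
    (h : 2 ^ (1 + y + z + 1) ≤ (2 ^ 1 + 1) * (2 ^ y + 1) * (2 ^ z + 1)) :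
    digitSum ((2 ^ 1 + 1) * (2 ^ y + 1) * (2 ^ z + 1)) ≤ 4 := by
  rcases (by omega : y = 1 ∨ z = 1 ∨ (2 ≤ y ∧ 2 ≤ z)) with rfl | rfl | ⟨hy2, hz2⟩
  · exact digitSum_le_length_of_eq_sum_map_two_pow [z + 3, z, 3, 0] (by simp; ring)
  · exact digitSum_le_length_of_eq_sum_map_two_pow [y + 3, y, 3, 0] (by simp; ring)
  · have hY : 4 ≤ 2 ^ y := by simpa using Nat.pow_le_pow_right two_pos hy2
    have hZ : 4 ≤ 2 ^ z := by simpa using Nat.pow_le_pow_right two_pos hz2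
    rw [pow_add, pow_add, pow_add] at h
    have hy3 : y < 4 := by
      by_contra! hy4
      have : 16 ≤ 2 ^ y := by simpa using Nat.pow_le_pow_right two_pos hy4
      nlinarith
    have hz3 : z < 4 := by
      by_contra! hz4
      have : 16 ≤ 2 ^ z := by simpa using Nat.pow_le_pow_right two_pos hz4
      nlinarith
    interval_cases y <;> interval_cases z <;> revert h <;> norm_num [digitSum]

theorem digitSum_le_four_of_two_pow_le_mul {x y z : ℕ} (hx : 1 ≤ x) (hy : 1 ≤ y) (hz : 1 ≤ z)
    (h : 2 ^ (x + y + z + 1) ≤ (2 ^ x + 1) * (2 ^ y + 1) * (2 ^ z + 1)) :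
    digitSum ((2 ^ x + 1) * (2 ^ y + 1) * (2 ^ z + 1)) ≤ 4 := by
  rcases (by omega : x = 1 ∨ y = 1 ∨ z = 1 ∨ (2 ≤ x ∧ 2 ≤ y ∧ 2 ≤ z)) with
    rfl | rfl | rfl | ⟨hx2, hy2, hz2⟩
  · exact digitSum_le_four_of_two_pow_le_three_mul hy hz h
  · rw [show (2 ^ x + 1) * (2 ^ 1 + 1) * (2 ^ z + 1) = (2 ^ 1 + 1) * (2 ^ x + 1) * (2 ^ z + 1) by
      ring] at h ⊢
    exact digitSum_le_four_of_two_pow_le_three_mul hx hz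
      (by rwa [show 1 + x + z + 1 = x + 1 + z + 1 by omega])
  · rw [show (2 ^ x + 1) * (2 ^ y + 1) * (2 ^ 1 + 1) = (2 ^ 1 + 1) * (2 ^ x + 1) * (2 ^ y + 1) by
      ring] at h ⊢
    exact digitSum_le_four_of_two_pow_le_three_mul hx hy
      (by rwa [show 1 + x + y + 1 = x + y + 1 + 1 by omega])
  · have hX : 4 ≤ 2 ^ x := by simpa using Nat.pow_le_pow_right two_pos hx2
    have hY : 4 ≤ 2 ^ y := by simpa using Nat.pow_le_pow_right two_pos hy2
    have hZ : 4 ≤ 2 ^ z := by simpa using Nat.pow_le_pow_right two_pos hz2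
    rw [pow_succ, pow_add, pow_add] at h
    nlinarith [Nat.mul_le_mul hX hY, Nat.mul_le_mul hY hZ, Nat.mul_le_mul hX hZ]

theorem digitSum_le_four_of_two_pow_le_mul_two_pow_add_two_pow_add_two {c k K : ℕ}
    (hc : 1 ≤ c) (hk : 2 ≤ k) (hkK : k < K)
    (h : 2 ^ (K + c + 1) ≤ (2 ^ c + 1) * (2 ^ K + 2 ^ k + 2)) :
    digitSum ((2 ^ c + 1) * (2 ^ K + 2 ^ k + 2)) ≤ 4 := by
  obtain ⟨d, rfl⟩ : ∃ d, K = k + d + 1 := ⟨K - k - 1, by omega⟩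
  have hA : 4 ≤ 2 ^ k := by simpa using Nat.pow_le_pow_right two_pos hk
  have hC : 2 ≤ 2 ^ c := by simpa using Nat.pow_le_pow_right two_pos hc
  have hD : 1 ≤ 2 ^ d := Nat.one_le_two_pow
  have hP : 2 ^ k ≤ 2 ^ d * 2 ^ k := Nat.le_mul_of_pos_left _ hD
  have h' : 4 * (2 ^ d * 2 ^ k) * 2 ^ c ≤ (2 ^ c + 1) * (2 * (2 ^ d * 2 ^ k) + 2 ^ k + 2) :=
    calc _ = 2 ^ (k + d + 1 + c + 1) := by ring
      _ ≤ _ := h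
      _ = _ := by ring
  have hc3 : c < 3 := by
    by_contra! hc3
    have : 8 ≤ 2 ^ c := by simpa using Nat.pow_le_pow_right two_pos hc3
    nlinarith [Nat.mul_le_mul (hA.trans hP) this, Nat.mul_le_mul_right (2 ^ c) hP]
  interval_cases c
  all_goals
    have hd2 : d < 2 := by
      by_contra! hd2
      have : 4 ≤ 2 ^ d := by simpa using Nat.pow_le_pow_right two_pos hd2
      have := Nat.mul_le_mul_right (2 ^ k) this
      omega
    interval_cases d
  · exact digitSum_le_length_of_eq_sum_map_two_pow [k + 3, k, 2, 1] (by simp; ring)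
  all_goals
    have hk3 : k < 4 := by
      by_contra! hk4
      have : 16 ≤ 2 ^ k := by simpa using Nat.pow_le_pow_right two_pos hk4
      omega
    interval_cases k <;> revert h <;> norm_num [digitSum]

/-! ### The bounds satisfied by every expression -/

def HasHeavyMultiple (n : ℕ) : Prop :=
  ∃ c, 1 ≤ c ∧ 2 ^ (Nat.log 2 n + c + 1) ≤ (2 ^ c + 1) * n ∧ 5 ≤ digitSum ((2 ^ c + 1) * n)

theorem hasHeavyMultiple_two_pow_mul_iff (k : ℕ) {b : ℕ} (hb : b ≠ 0) :
    HasHeavyMultiple (2 ^ k * b) ↔ HasHeavyMultiple b := by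
  unfold HasHeavyMultiple
  refine exists_congr fun c => and_congr_right fun _ => ?_
  rw [log_two_pow_mul k hb, show (2 ^ c + 1) * (2 ^ k * b) = 2 ^ k * ((2 ^ c + 1) * b) by ring,
    digitSum_two_pow_mul, show k + Nat.log 2 b + c + 1 = k + (Nat.log 2 b + c + 1) by ring,
    pow_add, Nat.mul_le_mul_left_iff (by positivity)]

structure ReprBound (n m : ℕ) : Prop where
  two_le : 2 ≤ n
  even : 2 ∣ n
  le_two_pow : n ≤ 2 ^ m
  log_add_two_le : 3 ≤ digitSum n → Nat.log 2 n + 2 ≤ m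
  log_add_three_le_of_heavy : 3 ≤ digitSum n → HasHeavyMultiple n → Nat.log 2 n + 3 ≤ m
  log_add_three_le : 5 ≤ digitSum n → Nat.log 2 n + 3 ≤ m

namespace ReprBound

variable {n m a b p q : ℕ}

theorem ne_zero (h : ReprBound n m) : n ≠ 0 := by
  have := h.two_le
  omega

theorem one_le (h : ReprBound n m) : 1 ≤ m :=
  Nat.one_le_iff_ne_zero.mpr fun hm => by simpa [hm] using h.two_le.trans h.le_two_pow

theorem log_add_one_le (h : ReprBound n m) (hs : 2 ≤ digitSum n) : Nat.log 2 n + 1 ≤ m :=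
  Nat.log_lt_of_lt_pow h.ne_zero <|
    lt_of_le_of_ne h.le_two_pow (by rintro rfl; simp at hs)

theorem mono (h : ReprBound n m) {m' : ℕ} (hm : m ≤ m') : ReprBound n m' where
  two_le := h.two_le
  even := h.even
  le_two_pow := h.le_two_pow.trans (Nat.pow_le_pow_right two_pos hm)
  log_add_two_le hs := (h.log_add_two_le hs).trans hm
  log_add_three_le_of_heavy hs hheavy := (h.log_add_three_le_of_heavy hs hheavy).trans hm
  log_add_three_le hs := (h.log_add_three_le hs).trans hm

theorem of_digitSum_le_two (h2 : 2 ≤ n) (heven : 2 ∣ n) (hle : n ≤ 2 ^ m)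
    (hs : digitSum n ≤ 2) : ReprBound n m where
  two_le := h2
  even := heven
  le_two_pow := hle
  log_add_two_le _ := by omega
  log_add_three_le_of_heavy _ := by omega
  log_add_three_le _ := by omega

theorem of_log_add_three_le (h2 : 2 ≤ n) (heven : 2 ∣ n) (hlog : Nat.log 2 n + 3 ≤ m) :
    ReprBound n m where
  two_le := h2
  even := heven
  le_two_pow := (Nat.lt_pow_succ_log_self one_lt_two n).le.trans
    (Nat.pow_le_pow_right two_pos (by omega))
  log_add_two_le _ := by omega
  log_add_three_le_of_heavy _ _ := hlog
  log_add_three_le _ := hlog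

theorem two_pow_mul (h : ReprBound b q) (i : ℕ) : ReprBound (2 ^ i * b) (i + q) := by
  have hlog := log_two_pow_mul i h.ne_zero
  have hs := digitSum_two_pow_mul i b
  refine ⟨?_, Dvd.dvd.mul_left h.even _, ?_, fun h3 => ?_, fun h3 hheavy => ?_, fun h5 => ?_⟩
  · exact h.two_le.trans (Nat.le_mul_of_pos_left _ (Nat.two_pow_pos i))
  · rw [pow_add]; exact Nat.mul_le_mul le_rfl h.le_two_pow
  · have := h.log_add_two_le (hs ▸ h3); omega
  · have := h.log_add_three_le_of_heavy (hs ▸ h3)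
      ((hasHeavyMultiple_two_pow_mul_iff i h.ne_zero).mp hheavy)
    omega
  · have := h.log_add_three_le (hs ▸ h5); omega

theorem pow_add_one_mul (h : ReprBound b q) (hs : 3 ≤ digitSum b) {x : ℕ} (hx : 1 ≤ x) :
    ReprBound ((2 ^ x + 1) * b) (x + 1 + q) := by
  have hq := h.log_add_two_le hs
  have hlo := le_log_two_pow_add_one_mul x h.ne_zero
  have hhi := log_two_pow_add_one_mul_le x b
  have h2 : 2 ≤ (2 ^ x + 1) * b := h.two_le.trans (Nat.le_mul_of_pos_left _ (by positivity))
  have heven : 2 ∣ (2 ^ x + 1) * b := Dvd.dvd.mul_left h.even _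
  rcases (by omega : Nat.log 2 ((2 ^ x + 1) * b) ≤ x + Nat.log 2 b ∨
    Nat.log 2 ((2 ^ x + 1) * b) = x + Nat.log 2 b + 1) with hlog | hlog
  · exact of_log_add_three_le h2 heven (by omega)
  have htop : 2 ^ (Nat.log 2 b + x + 1) ≤ (2 ^ x + 1) * b := by
    rw [show Nat.log 2 b + x + 1 = x + Nat.log 2 b + 1 by ring, ← hlog]
    exact Nat.pow_log_le_self 2 (by omega)
  refine ⟨h2, heven, ?_, fun _ => by omega, fun _ ⟨c, hc, hcR, hc5⟩ => ?_,
    fun h5 => by have := h.log_add_three_le_of_heavy hs ⟨x, hx, htop, h5⟩; omega⟩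
  · rw [pow_add, pow_succ]
    exact Nat.mul_le_mul (by linarith [Nat.one_le_two_pow (n := x)]) h.le_two_pow
  -- the multiplier `(2 ^ c + 1) * (2 ^ x + 1)` must itself overflow, which forces it to be `9`
  have hcx : 2 ^ (c + x + 1) ≤ (2 ^ c + 1) * (2 ^ x + 1) := by
    by_contra! hlt
    have hb := Nat.lt_pow_succ_log_self one_lt_two b
    have : (2 ^ c + 1) * ((2 ^ x + 1) * b) < 2 ^ (c + x + 1) * 2 ^ (Nat.log 2 b).succ := by
      rw [← mul_assoc]
      exact Nat.mul_lt_mul'' hlt hb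
    rw [← pow_add] at this
    rw [hlog, show x + Nat.log 2 b + 1 + c + 1 = c + x + 1 + (Nat.log 2 b).succ by omega] at hcR
    omega
  obtain ⟨rfl, rfl⟩ := eq_one_of_two_pow_le_mul hc hx hcx
  rw [hlog] at hcR
  rw [show (2 ^ 1 + 1) * ((2 ^ 1 + 1) * b) = (2 ^ 3 + 1) * b by ring] at hcR hc5
  have := h.log_add_three_le_of_heavy hs
    ⟨3, by norm_num, by rwa [show Nat.log 2 b + 3 + 1 = 1 + Nat.log 2 b + 1 + 1 + 1 by ring], hc5⟩
  omega

theorem two_mul_pow_add_one_mul_pow_add_one {x y : ℕ} (hx : 1 ≤ x) (hy : 1 ≤ y) :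
    ReprBound (2 * ((2 ^ x + 1) * (2 ^ y + 1))) (x + y + 3) := by
  set P := (2 ^ x + 1) * (2 ^ y + 1) with hP
  have hP0 : P ≠ 0 := by positivity
  have hlog2 : Nat.log 2 (2 * P) = 1 + Nat.log 2 P := by
    simpa using log_two_pow_mul 1 hP0
  have hs2 : digitSum (2 * P) = digitSum P := by simpa using digitSum_two_pow_mul 1 P
  have hs : digitSum P ≤ 4 :=
    digitSum_le_length_of_eq_sum_map_two_pow [x + y, x, y, 0] (by simp [hP, pow_add]; ring)
  rcases lt_or_ge P (2 ^ (x + y + 1)) with hlt | hge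
  · have hlogP : Nat.log 2 P = x + y :=
      Nat.log_eq_of_pow_le_of_lt_pow
        (by rw [hP, pow_add]; exact Nat.mul_le_mul (Nat.le_succ _) (Nat.le_succ _)) hlt
    refine ⟨by omega, dvd_mul_right 2 P, ?_, fun _ => by omega, fun _ ⟨c, hc, hcP, hc5⟩ => ?_,
      fun h5 => by omega⟩
    · rw [show x + y + 3 = 1 + (x + y + 1) + 1 by ring, pow_succ, pow_add]
      omega
    rw [hlog2, hlogP] at hcP
    rw [show (2 ^ c + 1) * (2 * P) = 2 * ((2 ^ c + 1) * P) by ring] at hcP hc5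
    have hcP' : 2 ^ (c + x + y + 1) ≤ (2 ^ c + 1) * (2 ^ x + 1) * (2 ^ y + 1) := by
      rw [mul_assoc, ← hP]
      rw [show 1 + (x + y) + c + 1 = (c + x + y + 1) + 1 by ring, pow_succ] at hcP
      omega
    have := digitSum_le_four_of_two_pow_le_mul hc hx hy hcP'
    rw [mul_assoc, ← hP] at this
    have := digitSum_two_pow_mul 1 ((2 ^ c + 1) * P)
    rw [pow_one] at this
    omega
  · obtain ⟨rfl, rfl⟩ := eq_one_of_two_pow_le_mul hx hy hge
    exact of_digitSum_le_two (by norm_num) (dvd_mul_right 2 _) (by norm_num) (by decide)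

theorem exists_eq_two_pow_of_digitSum_le_one (h : ReprBound n m) (hs : digitSum n ≤ 1) :
    ∃ k, 1 ≤ k ∧ k ≤ m ∧ n = 2 ^ k := by
  obtain ⟨k, rfl⟩ := exists_eq_two_pow_of_digitSum_eq_one
    (le_antisymm hs (Nat.pos_of_ne_zero (digitSum_eq_zero_iff.not.mpr h.ne_zero)))
  refine ⟨k, Nat.one_le_iff_ne_zero.mpr ?_, (Nat.pow_le_pow_iff_right one_lt_two).mp h.le_two_pow,
    rfl⟩
  rintro rfl
  simpa using h.two_le

theorem mul_of_three_le (ha : ReprBound a p) (hb : ReprBound b q) (hsa : 3 ≤ digitSum a)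
    (hsb : 3 ≤ digitSum b) : ReprBound (a * b) (p + q) :=
  of_log_add_three_le (ha.two_le.trans (Nat.le_mul_of_pos_right _ (by have := hb.two_le; omega)))
    (Dvd.dvd.mul_right ha.even _)
    (by have := ha.log_add_two_le hsa; have := hb.log_add_two_le hsb
        have := log_mul_le a b; omega)

theorem mul (ha : ReprBound a p) (hb : ReprBound b q) : ReprBound (a * b) (p + q) := by
  wlog hab : digitSum a ≤ digitSum b generalizing a b p q
  · rw [mul_comm, add_comm]; exact this hb ha (by omega)
  rcases (by omega : digitSum a ≤ 1 ∨ digitSum a = 2 ∧ digitSum b = 2 ∨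
    digitSum a = 2 ∧ 3 ≤ digitSum b ∨ 3 ≤ digitSum a) with hsa | ⟨hsa, hsb⟩ | ⟨hsa, hsb⟩ | hsa
  · obtain ⟨i, -, hip, rfl⟩ := ha.exists_eq_two_pow_of_digitSum_le_one hsa
    exact (hb.two_pow_mul i).mono (by omega)
  · have hp := ha.log_add_one_le (by omega)
    have hq := hb.log_add_one_le (by omega)
    obtain ⟨k, x, hk, hx, rfl⟩ := exists_eq_two_pow_mul_two_pow_add_one ha.even hsa
    obtain ⟨l, y, hl, hy, rfl⟩ := exists_eq_two_pow_mul_two_pow_add_one hb.even hsb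
    rw [log_two_pow_mul_two_pow_add_one k hx] at hp
    rw [log_two_pow_mul_two_pow_add_one l hy] at hq
    rw [show 2 ^ k * (2 ^ x + 1) * (2 ^ l * (2 ^ y + 1)) =
      2 ^ (k + l - 1) * (2 * ((2 ^ x + 1) * (2 ^ y + 1))) by
        obtain ⟨k, rfl⟩ : ∃ k', k = k' + 1 := ⟨k - 1, by omega⟩
        rw [show k + 1 + l - 1 = k + l by omega]; ring]
    exact ((two_mul_pow_add_one_mul_pow_add_one hx hy).two_pow_mul _).mono (by omega)
  · have hp := ha.log_add_one_le (by omega)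
    obtain ⟨k, x, hk, hx, rfl⟩ := exists_eq_two_pow_mul_two_pow_add_one ha.even hsa
    rw [log_two_pow_mul_two_pow_add_one k hx] at hp
    rw [mul_assoc]
    exact ((hb.pow_add_one_mul hsb hx).two_pow_mul k).mono (by omega)
  · exact mul_of_three_le ha hb hsa (by omega)

theorem add_of_two_le (ha : ReprBound a p) (hb : ReprBound b q) (hsa : 2 ≤ digitSum a)
    (hsb : 2 ≤ digitSum b) : ReprBound (a + b) (p + q) :=
  of_log_add_three_le (by have := ha.two_le; omega) (dvd_add ha.even hb.even) <| by
    have := ha.log_add_one_le hsa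
    have := hb.log_add_one_le hsb
    have := digitSum_le_log ha.even
    have := digitSum_le_log hb.even
    have := log_add_le a b
    omega

theorem two_pow_add_of_three_le (h : ReprBound b q) (hs : 3 ≤ digitSum b) {j : ℕ} (hj : 1 ≤ j) :
    ReprBound (2 ^ j + b) (j + q) := by
  have hq := h.log_add_two_le hs
  have hb := digitSum_le_log h.even
  have h2 : 2 ≤ 2 ^ j + b := h.two_le.trans (Nat.le_add_left _ _)
  have heven : 2 ∣ 2 ^ j + b := dvd_add (dvd_pow_self 2 (by omega)) h.even
  have hlog := log_add_le (2 ^ j) b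
  rw [Nat.log_pow one_lt_two] at hlog
  rcases (by omega : (2 ≤ j ∨ Nat.log 2 (2 ^ j + b) ≤ Nat.log 2 b) ∨
    j = 1 ∧ Nat.log 2 (2 ^ j + b) = Nat.log 2 b + 1) with hsmall | ⟨rfl, hlog'⟩
  · exact of_log_add_three_le h2 heven (by omega)
  -- carrying into a new top bit from `2 + b` means that `2 + b` is a power of two
  have hpow : 2 ^ 1 + b = 2 ^ (Nat.log 2 b + 1) := by
    have hup := Nat.lt_pow_succ_log_self one_lt_two b
    have hlow := Nat.pow_log_le_self 2 (show 2 ^ 1 + b ≠ 0 by omega)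
    have := dvd_pow_self 2 (show (Nat.log 2 b).succ ≠ 0 by omega)
    rw [hlog'] at hlow
    rw [pow_one] at hlow ⊢
    omega
  rw [hpow]
  exact of_digitSum_le_two (hpow ▸ h2) (hpow ▸ heven)
    (Nat.pow_le_pow_right two_pos (by omega)) (by simp)

theorem two_pow_add_two_pow_add_two {k K : ℕ} (hk : 2 ≤ k) (hkK : k < K) {m : ℕ}
    (hm : K + 2 ≤ m) : ReprBound (2 ^ K + 2 ^ k + 2) m := by
  have hlog : Nat.log 2 (2 ^ K + 2 ^ k + 2) = K := by
    rw [add_assoc]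
    simpa using log_two_pow_add (two_pow_add_two_pow_lt (j := 1) (by omega) hkK (by omega))
  have htop := Nat.lt_pow_succ_log_self one_lt_two (2 ^ K + 2 ^ k + 2)
  rw [hlog] at htop
  have hs : digitSum (2 ^ K + 2 ^ k + 2) ≤ 3 :=
    digitSum_le_length_of_eq_sum_map_two_pow [K, k, 1] (by simp [add_assoc])
  refine ⟨Nat.le_add_left _ _,
    dvd_add (dvd_add (dvd_pow_self 2 (by omega)) (dvd_pow_self 2 (by omega))) dvd_rfl,
    htop.le.trans (Nat.pow_le_pow_right two_pos (by omega)), fun _ => by omega,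
    fun _ ⟨c, hc, hcn, hc5⟩ => ?_, fun _ => by omega⟩
  rw [hlog] at hcn
  have := digitSum_le_four_of_two_pow_le_mul_two_pow_add_two_pow_add_two hc hk hkK hcn
  omega

theorem two_pow_add_of_digitSum_eq_two (h : ReprBound b q) (hs : digitSum b = 2) {j : ℕ}
    (hj : 1 ≤ j) : ReprBound (2 ^ j + b) (j + q) := by
  have hle : 2 ^ j + b ≤ 2 ^ (j + q) := add_le_two_pow_add hj h.one_le le_rfl h.le_two_pow
  have h2 : 2 ≤ 2 ^ j + b := h.two_le.trans (Nat.le_add_left _ _)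
  have heven : 2 ∣ 2 ^ j + b := dvd_add (dvd_pow_self 2 (by omega)) h.even
  have hq := h.log_add_one_le (by omega)
  obtain ⟨k, x, hk, hx, rfl⟩ := exists_eq_two_pow_mul_two_pow_add_one h.even hs
  rw [log_two_pow_mul_two_pow_add_one k hx] at hq
  have hn : 2 ^ j + 2 ^ k * (2 ^ x + 1) = 2 ^ (k + x) + (2 ^ k + 2 ^ j) := by ring
  rcases (by omega : j = k ∨ j = k + x ∨ (j = 1 ∧ 2 ≤ k) ∨ (2 ≤ j ∧ j ≠ k ∧ j ≠ k + x)) with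
    rfl | rfl | ⟨rfl, hk2⟩ | ⟨hj2, hjk, hjkx⟩
  · exact of_digitSum_le_two h2 heven hle
      (digitSum_le_length_of_eq_sum_map_two_pow [j + 1, j + x] (by simp; ring))
  · exact of_digitSum_le_two h2 heven hle
      (digitSum_le_length_of_eq_sum_map_two_pow [k, k + x + 1] (by simp; ring))
  · rw [show 2 ^ 1 + 2 ^ k * (2 ^ x + 1) = 2 ^ (k + x) + 2 ^ k + 2 by ring]
    exact two_pow_add_two_pow_add_two hk2 (by omega) (by omega)
  · refine of_log_add_three_le h2 heven ?_
    rcases lt_or_gt_of_ne hjkx with hlt | hgt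
    · rw [hn, log_two_pow_add (two_pow_add_two_pow_lt (Ne.symm hjk) (by omega) hlt)]
      omega
    · have hb := Nat.lt_pow_succ_log_self one_lt_two (2 ^ k * (2 ^ x + 1))
      rw [log_two_pow_mul_two_pow_add_one k hx] at hb
      rw [log_two_pow_add (hb.trans_le (Nat.pow_le_pow_right two_pos hgt))]
      omega

theorem two_pow_add (h : ReprBound b q) {j : ℕ} (hj : 1 ≤ j) : ReprBound (2 ^ j + b) (j + q) := by
  rcases (by omega : digitSum b ≤ 1 ∨ digitSum b = 2 ∨ 3 ≤ digitSum b) with hs | hs | hs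
  · obtain ⟨i, -, -, rfl⟩ := h.exists_eq_two_pow_of_digitSum_le_one hs
    exact of_digitSum_le_two (h.two_le.trans (Nat.le_add_left _ _))
      (dvd_add (dvd_pow_self 2 (by omega)) h.even)
      (add_le_two_pow_add hj h.one_le le_rfl h.le_two_pow)
      (digitSum_le_length_of_eq_sum_map_two_pow [j, i] (by simp))
  · exact h.two_pow_add_of_digitSum_eq_two hs hj
  · exact h.two_pow_add_of_three_le hs hj

theorem add (ha : ReprBound a p) (hb : ReprBound b q) : ReprBound (a + b) (p + q) := by
  wlog hab : digitSum a ≤ digitSum b generalizing a b p q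
  · rw [add_comm a, add_comm p]; exact this hb ha (by omega)
  rcases (by omega : digitSum a ≤ 1 ∨ 2 ≤ digitSum a) with hsa | hsa
  · obtain ⟨j, hj, hjp, rfl⟩ := ha.exists_eq_two_pow_of_digitSum_le_one hsa
    exact (hb.two_pow_add hj).mono (by omega)
  · exact add_of_two_le ha hb hsa (by omega)

end ReprBound

theorem _root_.CanRepr.reprBound {n m : ℕ} (h : CanRepr 2 n m) : ReprBound n m := by
  induction h with
  | base => exact .of_digitSum_le_two le_rfl dvd_rfl (by norm_num) (by decide)
  | add _ _ iha ihb => exact iha.add ihb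
  | mul _ _ iha ihb => exact iha.mul ihb

theorem canRepr_two_mul_succ (j : ℕ) : CanRepr 2 (2 * (j + 1)) (j + 1) := by
  induction j with
  | zero => exact .base
  | succ j ih => exact .add ih .base

theorem exists_canRepr_of_two_dvd {n : ℕ} (heven : 2 ∣ n) (hn : n ≠ 0) : ∃ m, CanRepr 2 n m := by
  obtain ⟨j, rfl⟩ := heven
  obtain ⟨i, rfl⟩ := Nat.exists_eq_succ_of_ne_zero (right_ne_zero_of_mul hn)
  exact ⟨_, canRepr_two_mul_succ i⟩

theorem logb_two_lt_log_add_one {n : ℕ} (hn : n ≠ 0) : Real.logb 2 n < Nat.log 2 n + 1 := by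
  rw [Real.logb_lt_iff_lt_rpow one_lt_two (by positivity),
    show (Nat.log 2 n : ℝ) + 1 = ((Nat.log 2 n + 1 : ℕ) : ℝ) by push_cast; ring,
    Real.rpow_natCast]
  exact_mod_cast Nat.lt_pow_succ_log_self one_lt_two n

end TwoComplexity

theorem stmt_11_general (n : ℕ) (heven : 2 ∣ n)
    (hdigits : 5 ≤ (Nat.digits 2 n).sum) :
    Real.logb 2 n + 2 ≤ (complexity 2 n : ℝ) := by
  have hn : n ≠ 0 := by rintro rfl; simp at hdigits
  obtain ⟨m, hm⟩ := TwoComplexity.exists_canRepr_of_two_dvd heven hn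
  have hbound := (Nat.sInf_mem ⟨m, hm⟩ : CanRepr 2 n (complexity 2 n)).reprBound
  have hlog := TwoComplexity.logb_two_lt_log_add_one hn
  have : ((Nat.log 2 n + 3 : ℕ) : ℝ) ≤ complexity 2 n := mod_cast hbound.log_add_three_le hdigits
  push_cast at this
  linarith

theorem stmt_11 (n : ℕ) (hn : 0 < n) (heven : 2 ∣ n)
    (hdigits : 5 ≤ (Nat.digits 2 n).sum) :
    Real.logb 2 n + 2 ≤ (complexity 2 n : ℝ) :=
  stmt_11_general n heven hdigits
end
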